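/- Let l > 0 and let h : ℍ → [0,∞) be continuous with sup_{z ∈ 𝒰_l} |h(z) − Im z| < ∞ and κ := Lip((h − Im)|_{𝒰_l}) < ∞. Then the function H is Lipschitz with constant κ along the diagonal direction (1,1): for every (x₁,x₂) ∈ U_l and every s ∈ ℝ (so that also (x₁+s, x₂+s) ∈ U_l), |H(x₁+s, x₂+s) − H(x₁,x₂)| ≤ κ·|s|. -/

import Mathlib

noncomputable section

/-- The upper half-plane `ℍ = {z : 0 < Im z}` as a subset of `ℂ`. -/
def UHP : Set ℂ := {z : ℂ | 0 < z.im}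

/-- The hyperbolic geodesic of `ℍ` with endpoints `x, y ∈ ℝ`: the Euclidean semicircle
of center `(x+y)/2` and radius `|y−x|/2`. -/
def geodesicSet (x y : ℝ) : Set ℂ :=
  {z : ℂ | ∃ θ : ℝ, 0 < θ ∧ θ < Real.pi ∧
    z = (((x + y) / 2 : ℝ) : ℂ) + ((|y - x| / 2 : ℝ) : ℂ) * Complex.exp ((θ : ℂ) * Complex.I)}

/-- The truncation `h_l` of `h`: equal to `h z` if `Im z > l` and to `0` otherwise. -/
def truncate (h : ℂ → ℝ) (l : ℝ) (z : ℂ) : ℝ := if l < z.im then h z else 0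

/-- `H(x₁,x₂) := sup_{z ∈ γ(x₁,x₂)} h_l(z)`. -/
def Hfun (h : ℂ → ℝ) (l : ℝ) (x₁ x₂ : ℝ) : ℝ :=
  sSup (truncate h l '' geodesicSet x₁ x₂)

/-- `H₀(x₁,x₂) := |x₂ − x₁|/2`, the naive height of the geodesic `γ(x₁,x₂)`. -/
def H0fun (x₁ x₂ : ℝ) : ℝ := |x₂ - x₁| / 2

/-- `U_l := {(x₁,x₂) ∈ ℝ² : |x₂ − x₁| > 2l}`. -/
def Udom (l : ℝ) : Set (ℝ × ℝ) := {p : ℝ × ℝ | 2 * l < |p.2 - p.1|}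

/-!
Translating the endpoints by `s` translates the geodesic `γ(x₁,x₂)` horizontally by `s`, so
`H(x₁+s,x₂+s)` is the supremum of `z ↦ h_l(z+s)` over `γ(x₁,x₂)`. A horizontal translation does
not change `Im z`, hence neither which points are truncated, and on `𝒰_l` it changes `h` by
exactly the change of `h − Im`, which is at most `κ|s|`. Two suprema over the same set of
functions that are uniformly `κ|s|`-close differ by at most `κ|s|`, provided both are finite,
which holds because `h − Im` is bounded on `𝒰_l` and the geodesics are bounded.
-/

open Set

theorem abs_csSup_image_sub_csSup_image_le {α : Type*} {s : Set α} {f g : α → ℝ} {c : ℝ}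
    (hs : s.Nonempty) (hf : BddAbove (f '' s)) (hg : BddAbove (g '' s))
    (hfg : ∀ z ∈ s, |f z - g z| ≤ c) :
    |sSup (f '' s) - sSup (g '' s)| ≤ c := by
  have le_add {u v : α → ℝ} (hv : BddAbove (v '' s)) (huv : ∀ z ∈ s, u z ≤ v z + c) :
      sSup (u '' s) ≤ sSup (v '' s) + c :=
    csSup_le (hs.image u) <| forall_mem_image.2 fun z hz =>
      (huv z hz).trans (by gcongr; exact le_csSup hv (mem_image_of_mem v hz))
  rw [abs_sub_le_iff]
  constructor
  · linarith [le_add (u := f) hg fun z hz => by linarith [(abs_le.1 (hfg z hz)).2]]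
  · linarith [le_add (u := g) hf fun z hz => by linarith [(abs_le.1 (hfg z hz)).1]]

theorem geodesicSet_add (x y s : ℝ) :
    geodesicSet (x + s) (y + s) = (· + (s : ℂ)) '' geodesicSet x y := by
  have hrad : |y + s - (x + s)| = |y - x| := by ring_nf
  ext z
  constructor
  · rintro ⟨θ, hθ₀, hθπ, rfl⟩
    refine ⟨_, ⟨θ, hθ₀, hθπ, rfl⟩, ?_⟩
    rw [hrad]
    push_cast
    ring
  · rintro ⟨w, ⟨θ, hθ₀, hθπ, rfl⟩, rfl⟩
    refine ⟨θ, hθ₀, hθπ, ?_⟩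
    rw [hrad]
    push_cast
    ring

theorem geodesicSet_nonempty (x y : ℝ) : (geodesicSet x y).Nonempty :=
  ⟨_, Real.pi / 2, by positivity, half_lt_self Real.pi_pos, rfl⟩

theorem im_le_of_mem_geodesicSet {x y : ℝ} {z : ℂ} (hz : z ∈ geodesicSet x y) :
    z.im ≤ |y - x| / 2 := by
  obtain ⟨θ, -, -, rfl⟩ := hz
  rw [Complex.add_im, Complex.ofReal_im, zero_add, Complex.im_ofReal_mul,
    Complex.exp_ofReal_mul_I_im]
  exact mul_le_of_le_one_right (by positivity) (Real.sin_le_one θ)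

theorem bddAbove_truncate_image {h : ℂ → ℝ} {l δ : ℝ}
    (hsup : ∀ z : ℂ, l < z.im → |h z - z.im| ≤ δ) {s : Set ℂ} {M : ℝ}
    (hM : ∀ z ∈ s, z.im ≤ M) : BddAbove (truncate h l '' s) := by
  refine ⟨max 0 (M + δ), forall_mem_image.2 fun z hz => ?_⟩
  unfold truncate
  split_ifs with hlz
  · exact le_max_of_le_right (by linarith [(abs_le.1 (hsup z hlz)).2, hM z hz])
  · exact le_max_left _ _

theorem abs_truncate_add_ofReal_sub_le {h : ℂ → ℝ} {l κ : ℝ}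
    (hlip : ∀ z w : ℂ, l < z.im → l < w.im →
      |(h z - z.im) - (h w - w.im)| ≤ κ * ‖z - w‖) (s : ℝ) (z : ℂ) :
    |truncate h l (z + s) - truncate h l z| ≤ κ * |s| := by
  have hnorm : ∀ w : ℂ, ‖w + s - w‖ = |s| := by simp
  have him : ∀ w : ℂ, (w + s).im = w.im := by simp
  have hlip_add (w : ℂ) (hw : l < w.im) : |h (w + s) - h w| ≤ κ * |s| := by
    simpa [him, hnorm] using hlip (w + s) w (by rwa [him]) hw
  unfold truncate
  rw [him]
  split_ifs with hlz
  · exact hlip_add z hlz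
  · -- `κ * |s| ≥ 0` is read off `hlip` at any point of `𝒰_l`
    simpa using (abs_nonneg _).trans (hlip_add ((l + 1) * Complex.I) (by simp))

theorem H_lipschitz_diagonal_direction_general (l : ℝ) (h : ℂ → ℝ)
    (δ : ℝ) (hsup : ∀ z : ℂ, l < z.im → |h z - z.im| ≤ δ)
    (κ : ℝ)
    (hlip : ∀ z w : ℂ, l < z.im → l < w.im →
      |(h z - z.im) - (h w - w.im)| ≤ κ * ‖z - w‖) :
    ∀ x₁ x₂ s : ℝ, 2 * l < |x₂ - x₁| →
      |Hfun h l (x₁ + s) (x₂ + s) - Hfun h l x₁ x₂| ≤ κ * |s| := by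
  intro x₁ x₂ s _
  have hbdd : ∀ x y : ℝ, BddAbove (truncate h l '' geodesicSet x y) := fun x y =>
    bddAbove_truncate_image hsup fun _ => im_le_of_mem_geodesicSet
  unfold Hfun
  rw [geodesicSet_add, image_image]
  refine abs_csSup_image_sub_csSup_image_le (geodesicSet_nonempty x₁ x₂) ?_ (hbdd x₁ x₂)
    fun z _ => abs_truncate_add_ofReal_sub_le hlip s z
  simpa only [geodesicSet_add, image_image] using hbdd (x₁ + s) (x₂ + s)

/-- `H` is Lipschitz with constant `κ` in the diagonal direction `(1,1)`, where `κ` is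
(a bound for) the Lipschitz constant of `(h − Im)|_{𝒰_l}`. -/
theorem H_lipschitz_diagonal_direction (l : ℝ) (hl : 0 < l) (h : ℂ → ℝ)
    (hcont : ContinuousOn h UHP) (hnn : ∀ z ∈ UHP, 0 ≤ h z)
    (δ : ℝ) (hsup : ∀ z : ℂ, l < z.im → |h z - z.im| ≤ δ)
    (κ : ℝ) (hκ : 0 ≤ κ)
    (hlip : ∀ z w : ℂ, l < z.im → l < w.im →
      |(h z - z.im) - (h w - w.im)| ≤ κ * ‖z - w‖) :
    ∀ x₁ x₂ s : ℝ, 2 * l < |x₂ - x₁| →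
      |Hfun h l (x₁ + s) (x₂ + s) - Hfun h l x₁ x₂| ≤ κ * |s| :=
  H_lipschitz_diagonal_direction_general l h δ hsup κ hlip
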